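/- arXiv:1011.6076 — 3 statements merged into one kernel-verified Lean document; each statement's English description precedes it below -/
import Mathlib

section
/- Let F be the Minkowski gauge of a compact convex body K ⊂ ℝⁿ with 0 in its interior, assume F is C¹ on ℝⁿ∖{0}, and let μ be a compactly supported Borel probability measure on ℝⁿ. Then for every x ∈ ℝⁿ the function F_{μ_x} is differentiable at x, and x is a local minimum of F_μ if and only if μ({x}) ≥ F*(D F_{μ_x}(x)), where D F_{μ_x}(x) is the derivative (as a linear functional) of F_{μ_x} at x. -/
open MeasureTheory Set Filter Topology
open scoped NNReal

/-!
Write `ν = μ_x`, the restriction of `μ` to `{x}ᶜ`, and `c = μ({x})`, so that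
`F_μ(y) = F_ν(y) + c * F(x - y)`. The function `F_ν` is convex, and since `ν` has no atom at `x`
while `F` is Lipschitz and differentiable off `0`, differentiation under the integral shows that
`F_ν` is differentiable at `x`, with derivative `D` say. For a convex `G` with derivative `D` at `x`
and a positively homogeneous `N`, the point `x` is a local minimum of `G y + c * N(x - y)` iff
`D ≤ c * N`: necessity by differentiating along the rays `t ↦ x - t • w`, `t ≥ 0`, sufficiency by
the supporting hyperplane `G x + D (y - x) ≤ G y`. Finally `D ≤ c * F` says exactly
`F*(D) ≤ c`, by rescaling onto the unit ball `{F ≤ 1}`.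
-/

section Gauge

variable {E : Type*}

theorem convexOn_gauge [AddCommGroup E] [Module ℝ E] {K : Set E} (hK : Convex ℝ K)
    (hK₀ : Absorbent ℝ K) : ConvexOn ℝ univ (gauge K) :=
  ⟨convex_univ, fun u _ v _ a b ha hb _ =>
    calc gauge K (a • u + b • v) ≤ gauge K (a • u) + gauge K (b • v) := gauge_add_le hK hK₀ _ _
      _ = a * gauge K u + b * gauge K v := by
        rw [gauge_smul_of_nonneg ha, gauge_smul_of_nonneg hb, smul_eq_mul, smul_eq_mul]⟩

theorem ConvexOn.comp_const_sub [AddCommGroup E] [Module ℝ E] {f : E → ℝ}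
    (hf : ConvexOn ℝ univ f) (z : E) : ConvexOn ℝ univ fun y => f (z - y) :=
  ⟨convex_univ, fun y _ y' _ a b ha hb hab => by
    convert hf.2 (mem_univ (z - y)) (mem_univ (z - y')) ha hb hab using 2
    rw [smul_sub, smul_sub, sub_add_sub_comm, ← add_smul, hab, one_smul]⟩

theorem sSup_image_gauge_le_one_le_iff [NormedAddCommGroup E] [NormedSpace ℝ E] {K : Set E}
    (hK : Convex ℝ K) (hK₀ : K ∈ 𝓝 0) (hKb : Bornology.IsBounded K) (D : E →L[ℝ] ℝ) {c : ℝ}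
    (hc : 0 ≤ c) : sSup (D '' {y | gauge K y ≤ 1}) ≤ c ↔ ∀ w, D w ≤ c * gauge K w := by
  constructor
  · intro h w
    have hbdd : BddAbove (D '' {y | gauge K y ≤ 1}) := by
      have hball : {y | gauge K y ≤ 1} = closure K :=
        Set.ext fun y => gauge_le_one_iff_mem_closure hK hK₀
      rw [hball]
      exact (D.lipschitz.isBounded_image hKb.closure).bddAbove
    rcases (gauge_nonneg w).eq_or_lt with hw | hw
    · rw [eq_comm, gauge_eq_zero (absorbent_nhds_zero hK₀)
        (NormedSpace.isVonNBounded_of_isBounded ℝ hKb)] at hw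
      simp [hw]
    · have hunit : gauge K ((gauge K w)⁻¹ • w) ≤ 1 := by
        rw [gauge_smul_of_nonneg (inv_nonneg.2 hw.le), smul_eq_mul, inv_mul_cancel₀ hw.ne']
      have := (le_csSup hbdd ⟨_, hunit, rfl⟩).trans h
      rwa [map_smul, smul_eq_mul, inv_mul_le_iff₀ hw, mul_comm] at this
  · intro h
    refine Real.sSup_le ?_ hc
    rintro _ ⟨y, hy, rfl⟩
    exact (h y).trans (mul_le_of_le_one_right hc hy)

end Gauge

section Integral

variable {α : Type*} [MeasurableSpace α] {μ : Measure α}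

theorem Measure.sub_smul_dirac_eq_restrict_compl [MeasurableSingletonClass α] [IsFiniteMeasure μ]
    (x : α) : μ - μ {x} • Measure.dirac x = μ.restrict {x}ᶜ := by
  have hsplit : μ.restrict {x}ᶜ + μ {x} • Measure.dirac x = μ := by
    simpa using μ.restrict_add_restrict_compl (measurableSet_singleton x).compl
  have : IsFiniteMeasure (μ {x} • Measure.dirac x) := ⟨by simp [measure_lt_top]⟩
  calc μ - μ {x} • Measure.dirac x
      = μ.restrict {x}ᶜ + μ {x} • Measure.dirac x - μ {x} • Measure.dirac x := by rw [hsplit]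
    _ = μ.restrict {x}ᶜ := Measure.add_sub_cancel

theorem integral_eq_integral_restrict_compl_singleton_add [MeasurableSingletonClass α]
    {G : Type*} [NormedAddCommGroup G] [NormedSpace ℝ G] [CompleteSpace G] {f : α → G}
    (hf : Integrable f μ) (x : α) :
    ∫ z, f z ∂μ = ∫ z, f z ∂(μ.restrict {x}ᶜ) + μ.real {x} • f x := by
  rw [← integral_add_compl (measurableSet_singleton x) hf, integral_singleton, add_comm]

theorem Continuous.integrable_of_compl_null [TopologicalSpace α] [T2Space α]
    [OpensMeasurableSpace α] [IsFiniteMeasure μ] {G : Type*} [NormedAddCommGroup G] {f : α → G}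
    (hf : Continuous f) {s : Set α} (hs : IsCompact s) (hμs : μ sᶜ = 0) : Integrable f μ := by
  rw [← Measure.restrict_eq_self_of_ae_mem (ae_iff.mpr hμs)]
  exact hf.continuousOn.integrableOn_compact hs

theorem convexOn_integral {E : Type*} [AddCommGroup E] [Module ℝ E] {f : E → α → ℝ}
    (hf : ∀ a, ConvexOn ℝ univ (f · a)) (hint : ∀ y, Integrable (f y) μ) :
    ConvexOn ℝ univ fun y => ∫ a, f y a ∂μ := by
  refine ⟨convex_univ, fun y _ y' _ a b ha hb hab => ?_⟩
  have hya := (hint y).const_mul a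
  have hyb := (hint y').const_mul b
  calc ∫ z, f (a • y + b • y') z ∂μ ≤ ∫ z, a * f y z + b * f y' z ∂μ :=
        integral_mono (hint _) (hya.add hyb) fun z => (hf z).2 trivial trivial ha hb hab
    _ = a * ∫ z, f y z ∂μ + b * ∫ z, f y' z ∂μ := by
        rw [integral_add hya hyb, integral_const_mul, integral_const_mul]

end Integral

section Variational

variable {E : Type*} [NormedAddCommGroup E] [NormedSpace ℝ E]

theorem ConvexOn.le_of_hasFDerivAt {f : E → ℝ} {f' : E →L[ℝ] ℝ} {x : E}
    (hf : ConvexOn ℝ univ f) (hf' : HasFDerivAt f f' x) (y : E) : f x + f' (y - x) ≤ f y := by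
  set l : ℝ →ᵃ[ℝ] E := AffineMap.lineMap x y
  have hline : ConvexOn ℝ univ (f ∘ l) := by
    simpa only [preimage_univ] using hf.comp_affineMap l
  have hderiv : HasDerivAt (f ∘ l) (f' (y - x)) 0 :=
    hf'.comp_hasDerivAt_of_eq 0 AffineMap.hasDerivAt_lineMap (AffineMap.lineMap_apply_zero x y).symm
  have := hline.le_slope_of_hasDerivAt (mem_univ 0) (mem_univ 1) zero_lt_one hderiv
  simp only [slope_def_field, Function.comp_apply, l, AffineMap.lineMap_apply_one,
    AffineMap.lineMap_apply_zero, sub_zero, div_one] at this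
  linarith

theorem IsLocalMin.le_mul_of_hasFDerivAt {G N : E → ℝ} {D : E →L[ℝ] ℝ} {x : E} {c : ℝ}
    (hmin : IsLocalMin (fun y => G y + c * N (x - y)) x) (hD : HasFDerivAt G D x)
    (hN : ∀ t : ℝ, 0 ≤ t → ∀ w, N (t • w) = t * N w) (w : E) : D w ≤ c * N w := by
  have hN0 : N 0 = 0 := by simpa using hN 0 le_rfl 0
  have hray : HasDerivAt (fun t : ℝ => x - t • w) (-w) 0 := by
    simpa using ((hasDerivAt_id (0 : ℝ)).smul_const w).const_sub x
  have hmin_ray : IsLocalMinOn (fun t : ℝ => G (x - t • w) + c * (t * N w)) (Ici 0) 0 := by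
    have hto : Tendsto (fun t : ℝ => x - t • w) (𝓝[Ici 0] 0) (𝓝 x) := by
      simpa using hray.continuousAt.tendsto.mono_left nhdsWithin_le_nhds
    filter_upwards [hto.eventually hmin, self_mem_nhdsWithin] with t ht (ht0 : 0 ≤ t)
    simpa [hN0, hN t ht0] using ht
  have hderiv : HasDerivAt (fun t : ℝ => G (x - t • w) + c * (t * N w)) (D (-w) + c * N w) 0 :=
    ((hD.comp_hasDerivAt_of_eq 0 hray (by simp)).add
      (((hasDerivAt_id 0).mul_const (N w)).const_mul c)).congr_deriv (by simp)
  have hone : (1 : ℝ) ∈ posTangentConeAt (Ici 0) 0 := by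
    refine mem_posTangentConeAt_of_segment_subset ?_
    rw [zero_add, segment_eq_Icc zero_le_one]
    exact Icc_subset_Ici_self
  have := hmin_ray.hasFDerivWithinAt_nonneg hderiv.hasDerivWithinAt.hasFDerivWithinAt hone
  simp only [ContinuousLinearMap.toSpanSingleton_apply, one_smul, map_neg] at this
  linarith

theorem ConvexOn.isMinOn_add_mul_of_le {G N : E → ℝ} {D : E →L[ℝ] ℝ} {x : E} {c : ℝ}
    (hG : ConvexOn ℝ univ G) (hD : HasFDerivAt G D x) (hN0 : N 0 = 0)
    (hle : ∀ w, D w ≤ c * N w) : IsMinOn (fun y => G y + c * N (x - y)) univ x :=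
  isMinOn_univ_iff.mpr fun y => by
    have hsupport := hG.le_of_hasFDerivAt hD y
    have hopp : D (y - x) = -D (x - y) := by rw [← map_neg, neg_sub]
    have := hle (x - y)
    simp only [sub_self, hN0, mul_zero, add_zero]
    linarith

theorem ConvexOn.isLocalMin_add_mul_iff {G N : E → ℝ} {D : E →L[ℝ] ℝ} {x : E} {c : ℝ}
    (hG : ConvexOn ℝ univ G) (hD : HasFDerivAt G D x)
    (hN : ∀ t : ℝ, 0 ≤ t → ∀ w, N (t • w) = t * N w) :
    IsLocalMin (fun y => G y + c * N (x - y)) x ↔ ∀ w, D w ≤ c * N w :=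
  ⟨fun hmin => hmin.le_mul_of_hasFDerivAt hD hN, fun hle =>
    (hG.isMinOn_add_mul_of_le hD (by simpa using hN 0 le_rfl 0) hle).isLocalMin univ_mem⟩

end Variational

section Differentiation

variable {E : Type*} [NormedAddCommGroup E] [NormedSpace ℝ E] [FiniteDimensional ℝ E]
  [MeasurableSpace E] [BorelSpace E]

theorem hasFDerivAt_integral_comp_sub {F : E → ℝ} {L : ℝ≥0} (hF : LipschitzWith L F)
    {ν : Measure E} [IsFiniteMeasure ν] {x : E} (hint : Integrable (fun z => F (z - x)) ν)
    (hdiff : ∀ᵐ z ∂ν, DifferentiableAt ℝ F (z - x)) :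
    HasFDerivAt (fun y => ∫ z, F (z - y) ∂ν) (∫ z, -fderiv ℝ F (z - x) ∂ν) x := by
  refine (hasFDerivAt_integral_of_dominated_loc_of_lip (bound := fun _ => (L : ℝ)) univ_mem
    (Eventually.of_forall fun y =>
      (hF.continuous.comp (continuous_sub_right y)).aestronglyMeasurable)
    hint ((measurable_fderiv ℝ F).comp (measurable_sub_const x)).neg.aestronglyMeasurable
    (Eventually.of_forall fun z => ?_) (integrable_const _) (hdiff.mono fun z hz => ?_)).2
  · simpa [Function.comp_def] using
      (hF.comp (IsometryEquiv.subLeft z).isometry.lipschitz).lipschitzOnWith (s := univ)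
  · simpa [Function.comp_def] using hz.hasFDerivAt.comp x ((hasFDerivAt_id x).const_sub z)

end Differentiation

/-- Characterization of local minima of the median functional: for `F`
the Minkowski gauge of a compact convex body (`C¹` away from `0`) and `μ` a compactly
supported Borel probability measure on `ℝⁿ`, the functional `F_{μ_x}` (with
`μ_x = μ - μ({x})·δ_x`) is differentiable at `x`, and `x` is a local minimum of `F_μ`
iff `μ({x}) ≥ F*(D F_{μ_x}(x))`, `F*` being the dual gauge. -/
theorem median_localMin_iff
    {n : ℕ} (K : Set (EuclideanSpace ℝ (Fin n)))
    (hK_cpt : IsCompact K) (hK_conv : Convex ℝ K)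
    (hK_int : (0 : EuclideanSpace ℝ (Fin n)) ∈ interior K)
    (F : EuclideanSpace ℝ (Fin n) → ℝ) (hF : F = gauge K)
    (hFsmooth : ContDiffOn ℝ 1 F {(0 : EuclideanSpace ℝ (Fin n))}ᶜ)
    (μ : Measure (EuclideanSpace ℝ (Fin n))) [IsProbabilityMeasure μ]
    (hcpt : ∃ s : Set (EuclideanSpace ℝ (Fin n)), IsCompact s ∧ μ sᶜ = 0) :
    ∀ x : EuclideanSpace ℝ (Fin n),
      DifferentiableAt ℝ
        (fun y => ∫ z, F (z - y) ∂(μ - μ {x} • Measure.dirac x)) x ∧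
      (IsLocalMin (fun y => ∫ z, F (z - y) ∂μ) x ↔
        sSup ((fderiv ℝ (fun y => ∫ z, F (z - y) ∂(μ - μ {x} • Measure.dirac x)) x) ''
            {y | F y ≤ 1}) ≤ (μ {x}).toReal) := by
  intro x
  obtain ⟨s, hs, hμs⟩ := hcpt
  have hK₀ : K ∈ 𝓝 0 := mem_interior_iff_mem_nhds.mp hK_int
  obtain ⟨L, hlip⟩ := hK_conv.lipschitz_gauge hK₀
  subst hF
  have hint : ∀ y, Integrable (fun z => gauge K (z - y)) μ := fun y =>
    (hlip.continuous.comp (continuous_sub_right y)).integrable_of_compl_null hs hμs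
  have hdiff : ∀ᵐ z ∂μ.restrict {x}ᶜ, DifferentiableAt ℝ (gauge K) (z - x) := by
    refine (ae_restrict_mem (measurableSet_singleton x).compl).mono fun z hz => ?_
    have hne : z - x ∈ ({0} : Set _)ᶜ := by simpa [sub_eq_zero] using hz
    exact (hFsmooth.contDiffAt (isOpen_compl_singleton.mem_nhds hne)).differentiableAt one_ne_zero
  have hD := hasFDerivAt_integral_comp_sub hlip (hint x).restrict hdiff
  have hsplit : (fun y => ∫ z, gauge K (z - y) ∂μ) =
      fun y => (∫ z, gauge K (z - y) ∂μ.restrict {x}ᶜ) + (μ {x}).toReal * gauge K (x - y) :=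
    funext fun y => integral_eq_integral_restrict_compl_singleton_add (hint y) x
  have hconv : ConvexOn ℝ univ fun y => ∫ z, gauge K (z - y) ∂μ.restrict {x}ᶜ :=
    convexOn_integral ((convexOn_gauge hK_conv (absorbent_nhds_zero hK₀)).comp_const_sub)
      fun y => (hint y).restrict
  rw [Measure.sub_smul_dirac_eq_restrict_compl, hD.fderiv, hsplit,
    hconv.isLocalMin_add_mul_iff hD fun t ht w => gauge_smul_of_nonneg ht w,
    sSup_image_gauge_le_one_le_iff hK_conv hK₀ hK_cpt.isBounded _ ENNReal.toReal_nonneg]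
  exact ⟨hD.differentiableAt, Iff.rfl⟩
end

section
/- Let F be the Minkowski gauge of a compact convex body K ⊂ ℝⁿ with 0 in its interior, with F of class C¹ on ℝⁿ∖{0}, C ≥ 1 a constant with F(−v) ≤ C·F(v) for all v, and assume the Legendre map ℓ is a homeomorphism of ℝⁿ onto (ℝⁿ)*. Let p > 1 and let μ be a Borel probability measure with supp(μ) ⊆ B(x₀,R), and assume E_{μ,p} is strictly convex on B̄(x₀, C(1+C)R). Let a ↦ x(a) be a C¹ path solving x(0) = x₀ and x′(a) = ℓ⁻¹(−D E_{μ,p}(x(a))) for a ≥ 0. Then x(a) ∈ B̄(x₀, C(1+C)R) for all a ≥ 0, and x(a) converges as a → ∞ to the unique minimizer e_p of E_{μ,p} on B̄(x₀, C(1+C)R). -/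
/-!
Along the flow, `d/da E(x(a)) = DE(x)(ℓ⁻¹(-DE(x))) = -F(ℓ⁻¹(-DE(x)))²`, because Euler's identity
for the `2`-homogeneous `F²` gives `ℓ(v)(v) = F(v)²`. So `E` decreases along the flow. Since
`E(x₀) < Rᵖ`, while `F(x - x₀) ≥ (1 + C)R` forces `F(z - x) ≥ R` on the support of `μ` (triangle
inequality and `F(-v) ≤ C F(v)`) and hence `E(x) ≥ Rᵖ`, the path never leaves the ball. There
the strictly convex `C¹` function `E` has a unique minimizer `e_p` and no other critical point,
so the dissipation rate is positive away from `e_p`, and a LaSalle-type compactness argument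
gives `E(x(a)) → E(e_p)` and then `x(a) → e_p`.
-/

open MeasureTheory
open Topology Filter Set

section IntegralCompSub

variable {V G : Type*} [NormedAddCommGroup V] [ProperSpace V] [MeasurableSpace V]
  [NormedAddCommGroup G] {μ : Measure V} {S : Set V}

theorem exists_ae_bound_comp_sub {g : V → G} (hg : Continuous g) (hS : IsCompact S)
    (hμS : ∀ᵐ z ∂μ, z ∈ S) (x : V) :
    ∃ c, ∀ᵐ z ∂μ, ∀ y ∈ Metric.ball x 1, ‖g (z - y)‖ ≤ c := by
  obtain ⟨c, hc⟩ := ((hS.prod (isCompact_closedBall x 1)).image continuous_sub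
    |>.exists_bound_of_continuousOn hg.continuousOn)
  refine ⟨c, ?_⟩
  filter_upwards [hμS] with z hz y hy
  exact hc _ ⟨(z, y), ⟨hz, Metric.ball_subset_closedBall hy⟩, rfl⟩

variable [BorelSpace V] [IsFiniteMeasure μ]

theorem integrable_comp_sub {g : V → G} (hg : Continuous g) (hS : IsCompact S)
    (hμS : ∀ᵐ z ∂μ, z ∈ S) (x : V) : Integrable (fun z => g (z - x)) μ := by
  obtain ⟨c, hc⟩ := exists_ae_bound_comp_sub hg hS hμS x
  exact (integrable_const c).mono' (hg.comp (continuous_sub_right x)).aestronglyMeasurable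
    (hc.mono fun z hz => hz x (Metric.mem_ball_self one_pos))

variable [NormedSpace ℝ G]

theorem continuous_integral_comp_sub {g : V → G} (hg : Continuous g) (hS : IsCompact S)
    (hμS : ∀ᵐ z ∂μ, z ∈ S) : Continuous fun x => ∫ z, g (z - x) ∂μ := by
  refine continuous_iff_continuousAt.2 fun x => ?_
  obtain ⟨c, hc⟩ := exists_ae_bound_comp_sub hg hS hμS x
  refine continuousAt_of_dominated
    (Eventually.of_forall fun y => (hg.comp (continuous_sub_right y)).aestronglyMeasurable)
    ?_ (integrable_const c)
    (Eventually.of_forall fun z => (hg.comp (continuous_sub_left z)).continuousAt)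
  filter_upwards [Metric.ball_mem_nhds x one_pos] with y hy
  exact hc.mono fun z hz => hz y hy

variable [NormedSpace ℝ V]

theorem hasFDerivAt_integral_comp_sub_s9 {f : V → ℝ} (hf : ContDiff ℝ 1 f) (hS : IsCompact S)
    (hμS : ∀ᵐ z ∂μ, z ∈ S) (x : V) :
    HasFDerivAt (fun x => ∫ z, f (z - x) ∂μ) (∫ z, -fderiv ℝ f (z - x) ∂μ) x := by
  have hf' : Continuous fun v => -fderiv ℝ f v := (hf.continuous_fderiv one_ne_zero).neg
  obtain ⟨c, hc⟩ := exists_ae_bound_comp_sub hf' hS hμS x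
  refine hasFDerivAt_integral_of_dominated_of_fderiv_le (Metric.ball_mem_nhds x one_pos)
    (Eventually.of_forall fun y =>
      (hf.continuous.comp (continuous_sub_right y)).aestronglyMeasurable)
    (integrable_comp_sub hf.continuous hS hμS x)
    (hf'.comp (continuous_sub_right x)).aestronglyMeasurable hc (integrable_const c)
    (Eventually.of_forall fun z y _ => ?_)
  have hd := ((hf.differentiable one_ne_zero) (z - y)).hasFDerivAt.comp y
    ((hasFDerivAt_id y).const_sub z)
  rwa [ContinuousLinearMap.comp_neg, ContinuousLinearMap.comp_id] at hd

theorem contDiff_integral_comp_sub {f : V → ℝ} (hf : ContDiff ℝ 1 f) (hS : IsCompact S)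
    (hμS : ∀ᵐ z ∂μ, z ∈ S) : ContDiff ℝ 1 fun x => ∫ z, f (z - x) ∂μ := by
  have hderiv := hasFDerivAt_integral_comp_sub_s9 (μ := μ) hf hS hμS
  refine contDiff_one_iff_fderiv.2 ⟨fun x => (hderiv x).differentiableAt, ?_⟩
  rw [funext fun x => (hderiv x).fderiv]
  exact continuous_integral_comp_sub (hf.continuous_fderiv one_ne_zero).neg hS hμS

end IntegralCompSub

section RpowOfLipschitz

variable {V : Type*} [NormedAddCommGroup V] [NormedSpace ℝ V] {F : V → ℝ} {M : NNReal} {p : ℝ}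

theorem hasFDerivAt_rpow_of_lipschitzWith (hlip : LipschitzWith M F) (hF0 : F 0 = 0)
    (hF : ∀ v, 0 ≤ F v) (hsmooth : ContDiffOn ℝ 1 F {0}ᶜ) (hp : 1 < p) (v : V) :
    HasFDerivAt (fun w => F w ^ p) ((p * F v ^ (p - 1)) • fderiv ℝ F v) v := by
  rcases eq_or_ne v 0 with rfl | hv
  · rw [hF0, Real.zero_rpow (sub_ne_zero.2 hp.ne'), mul_zero, zero_smul,
      hasFDerivAt_iff_isLittleO_nhds_zero]
    simp only [zero_add, hF0, Real.zero_rpow (by linarith : p ≠ 0), sub_zero,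
      zero_apply]
    -- `F ^ p = F ^ (p - 1) * F` with `F ^ (p - 1) → 0` and `F = O(‖h‖)`.
    have hsmall : (fun h => F h ^ (p - 1)) =o[𝓝 0] fun _ => (1 : ℝ) := by
      refine Asymptotics.isLittleO_one_iff ℝ |>.2 ?_
      have := ((hlip.continuous.tendsto 0).rpow_const (Or.inr (sub_pos.2 hp).le))
      rwa [hF0, Real.zero_rpow (sub_ne_zero.2 hp.ne')] at this
    have hlin : F =O[𝓝 0] fun h => ‖h‖ := by
      refine Asymptotics.IsBigO.of_bound M (Eventually.of_forall fun h => ?_)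
      simpa [hF0, Real.dist_eq, abs_of_nonneg (hF h)] using hlip.dist_le_mul h 0
    refine ((hsmall.mul_isBigO hlin).congr (fun h => ?_) (fun h => one_mul _)).of_norm_right
    rw [← Real.rpow_add_one' (hF h) (by linarith), sub_add_cancel]
  · exact ((hsmooth.differentiableOn one_ne_zero).differentiableAt
      (isOpen_compl_singleton.mem_nhds hv)).hasFDerivAt.rpow_const (Or.inr hp.le)

theorem contDiff_one_rpow_of_lipschitzWith (hlip : LipschitzWith M F) (hF0 : F 0 = 0)
    (hF : ∀ v, 0 ≤ F v) (hsmooth : ContDiffOn ℝ 1 F {0}ᶜ) (hp : 1 < p) :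
    ContDiff ℝ 1 fun v => F v ^ p := by
  have hderiv := hasFDerivAt_rpow_of_lipschitzWith hlip hF0 hF hsmooth hp
  refine contDiff_one_iff_fderiv.2 ⟨fun v => (hderiv v).differentiableAt, ?_⟩
  rw [funext fun v => (hderiv v).fderiv, continuous_iff_continuousAt]
  intro v
  rcases eq_or_ne v 0 with rfl | hv
  · have hcoeff : Tendsto (fun w => p * F w ^ (p - 1) * M) (𝓝 0) (𝓝 0) := by
      have := (hlip.continuous.tendsto 0).rpow_const (Or.inr (sub_pos.2 hp).le)
      rw [hF0, Real.zero_rpow (sub_ne_zero.2 hp.ne')] at this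
      simpa using (this.const_mul p).mul_const (M : ℝ)
    rw [ContinuousAt, hF0, Real.zero_rpow (sub_ne_zero.2 hp.ne'), mul_zero, zero_smul]
    refine squeeze_zero_norm (fun w => ?_) hcoeff
    rw [norm_smul, Real.norm_eq_abs,
      abs_of_nonneg (mul_nonneg (by linarith) (Real.rpow_nonneg (hF w) _))]
    exact mul_le_mul_of_nonneg_left (norm_fderiv_le_of_lipschitz ℝ hlip)
      (mul_nonneg (by linarith) (Real.rpow_nonneg (hF w) _))
  · exact (continuousAt_const.mul ((hlip.continuous.continuousAt).rpow_const
      (Or.inr (sub_pos.2 hp).le))).smul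
      ((hsmooth.continuousOn_fderiv_of_isOpen isOpen_compl_singleton le_rfl).continuousAt
        (isOpen_compl_singleton.mem_nhds hv))

end RpowOfLipschitz

theorem fderiv_apply_self_of_homogeneous {V : Type*} [NormedAddCommGroup V] [NormedSpace ℝ V]
    {g : V → ℝ} {v : V} {k : ℕ} (hg : DifferentiableAt ℝ g v)
    (hhom : ∀ t : ℝ, 0 < t → g (t • v) = t ^ k * g v) : fderiv ℝ g v v = k * g v := by
  have hray : HasDerivAt (fun t : ℝ => g (t • v)) (fderiv ℝ g v v) 1 := by
    have hg' : HasFDerivAt g (fderiv ℝ g v) ((1 : ℝ) • v) := by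
      rw [one_smul]; exact hg.hasFDerivAt
    have h := hg'.comp_hasDerivAt (1 : ℝ) ((hasDerivAt_id' (1 : ℝ)).smul_const v)
    rwa [one_smul] at h
  have hpow : HasDerivAt (fun t : ℝ => t ^ k * g v) (k * g v) 1 := by
    simpa using (hasDerivAt_pow k (1 : ℝ)).mul_const (g v)
  refine hray.unique (hpow.congr_of_eventuallyEq ?_)
  filter_upwards [lt_mem_nhds one_pos] with t ht
  exact hhom t ht

theorem apply_rightInverse_neg_self {V : Type*} [NormedAddCommGroup V] [NormedSpace ℝ V]
    {ℓ : V → V →L[ℝ] ℝ} {ℓinv : (V →L[ℝ] ℝ) → V} (hright : Function.RightInverse ℓinv ℓ)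
    {q : V → ℝ} (hq : ∀ v, ℓ v v = q v) (L : V →L[ℝ] ℝ) : L (ℓinv (-L)) = -q (ℓinv (-L)) := by
  set w := ℓinv (-L)
  have hw : ℓ w = -L := hright (-L)
  rw [← neg_neg L, ← hw, neg_apply, hq]

section Gauge

variable {V : Type*} [NormedAddCommGroup V] [NormedSpace ℝ V] {K : Set V}

theorem isCompact_setOf_gauge_sub_le [ProperSpace V] (hK : Bornology.IsBounded K)
    (hc : Convex ℝ K) (h0 : K ∈ 𝓝 0) (c : V) (r : ℝ) : IsCompact {x | gauge K (x - c) ≤ r} := by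
  obtain ⟨ρ, hρ⟩ := hK.subset_closedBall 0
  have hρ' : 0 < max ρ 1 := lt_max_of_lt_right one_pos
  refine (isCompact_closedBall c (max ρ 1 * r)).of_isClosed_subset
    (isClosed_le ((continuous_gauge hc h0).comp (continuous_sub_right c)) continuous_const)
    fun x hx => ?_
  have h := le_gauge_of_subset_closedBall (x := x - c) (absorbent_nhds_zero h0) hρ'.le
    (hρ.trans (Metric.closedBall_subset_closedBall (le_max_left _ _)))
  rw [div_le_iff₀ hρ'] at h
  rw [Metric.mem_closedBall, dist_eq_norm]
  nlinarith [mem_ofPred_eq ▸ hx]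

theorem legendre_apply_self_eq_gauge_sq (hsmooth : ContDiffOn ℝ 1 (gauge K) {0}ᶜ)
    {ℓ : V → V →L[ℝ] ℝ}
    (hℓ : ∀ v, v ≠ 0 → ℓ v = (1 / 2 : ℝ) • fderiv ℝ (fun w => gauge K w ^ 2) v)
    (hℓ0 : ℓ 0 = 0) (v : V) : ℓ v v = gauge K v ^ 2 := by
  rcases eq_or_ne v 0 with rfl | hv
  · simp [hℓ0]
  have hdiff : DifferentiableAt ℝ (fun w => gauge K w ^ 2) v :=
    ((hsmooth.differentiableOn one_ne_zero).differentiableAt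
      (isOpen_compl_singleton.mem_nhds hv)).pow 2
  have heuler := fderiv_apply_self_of_homogeneous (k := 2) hdiff fun t ht => by
    rw [gauge_smul_of_nonneg ht.le, smul_eq_mul, mul_pow]
  rw [hℓ v hv, smul_apply, heuler, smul_eq_mul]
  ring

theorem eq_zero_of_gauge_rightInverse_neg_eq_zero (habs : Absorbent ℝ K)
    (hK : Bornology.IsBounded K) {ℓ : V → V →L[ℝ] ℝ} {ℓinv : (V →L[ℝ] ℝ) → V}
    (hright : Function.RightInverse ℓinv ℓ) (hℓ0 : ℓ 0 = 0) {L : V →L[ℝ] ℝ}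
    (h : gauge K (ℓinv (-L)) = 0) : L = 0 := by
  rw [gauge_eq_zero habs (NormedSpace.isVonNBounded_iff ℝ |>.2 hK)] at h
  simpa [h, hℓ0] using (hright (-L)).symm

end Gauge

theorem ConvexOn.isMinOn_of_hasFDerivAt_eq_zero {V : Type*} [NormedAddCommGroup V]
    [NormedSpace ℝ V] {f : V → ℝ} {s : Set V} {x : V} (hf : ConvexOn ℝ s f) (hx : x ∈ s)
    (hf' : HasFDerivAt f (0 : V →L[ℝ] ℝ) x) : IsMinOn f s x := by
  intro y hy
  set φ : ℝ →ᵃ[ℝ] V := AffineMap.lineMap x y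
  have hφ0 : φ 0 = x := AffineMap.lineMap_apply_zero x y
  have hφ1 : φ 1 = y := AffineMap.lineMap_apply_one x y
  have hψ : ConvexOn ℝ (φ ⁻¹' s) (f ∘ φ) := hf.comp_affineMap φ
  have hψ' : HasDerivAt (f ∘ φ) 0 0 := by
    have h : HasFDerivAt f (0 : V →L[ℝ] ℝ) (φ 0) := hφ0 ▸ hf'
    simpa using h.comp_hasDerivAt (0 : ℝ) AffineMap.hasDerivAt_lineMap
  have h := hψ.deriv_le_slope (x := 0) (y := 1) (by rwa [mem_preimage, hφ0])
    (by rwa [mem_preimage, hφ1]) one_pos hψ'.differentiableAt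
  rw [hψ'.deriv, slope_def_field] at h
  simpa [hφ0, hφ1] using h

theorem StrictConvexOn.exists_isMinOn_of_isCompact {V : Type*} [NormedAddCommGroup V]
    [NormedSpace ℝ V] {f : V → ℝ} {S : Set V} (hf : StrictConvexOn ℝ S f) (hS : IsCompact S)
    (hne : S.Nonempty) (hdiff : Differentiable ℝ f) :
    ∃ e ∈ S, IsMinOn f S e ∧ (∀ x ∈ S, x ≠ e → f e < f x) ∧
      ∀ x ∈ S, fderiv ℝ f x = 0 → x = e := by
  obtain ⟨e, he, he_min⟩ := hS.exists_isMinOn hne hdiff.continuous.continuousOn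
  have huniq : ∀ x ∈ S, IsMinOn f S x → x = e := fun x hx hx_min =>
    hf.eq_of_isMinOn hx_min he_min hx he
  refine ⟨e, he, he_min, fun x hx hne => ?_, fun x hx hcrit => huniq x hx ?_⟩
  · exact (he_min hx).lt_of_ne fun h => hne (huniq x hx fun y hy => h.symm.trans_le (he_min hy))
  · exact hf.convexOn.isMinOn_of_hasFDerivAt_eq_zero hx (hcrit ▸ (hdiff x).hasFDerivAt)

section Energy

variable {V : Type*} [MeasurableSpace V] {μ : Measure V} [IsProbabilityMeasure μ]

theorem integral_lt_of_ae_lt {f : V → ℝ} {c : ℝ} (hf : Integrable f μ)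
    (h : ∀ᵐ z ∂μ, f z < c) : ∫ z, f z ∂μ < c := by
  have hsupp : μ (Function.support fun z => c - f z) = 1 := by
    rw [← measure_univ (μ := μ)]
    refine measure_congr (ae_eq_univ.2 ?_)
    exact h.mono fun z hz => sub_ne_zero.2 hz.ne'
  have hpos : 0 < ∫ z, (c - f z) ∂μ :=
    (integral_pos_iff_support_of_nonneg_ae (h.mono fun z hz => (sub_pos.2 hz).le)
      ((integrable_const c).sub hf)).2 (by rw [hsupp]; exact one_pos)
  rw [integral_sub (integrable_const c) hf, integral_const, probReal_univ, one_smul] at hpos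
  linarith

variable [NormedAddCommGroup V] {F : V → ℝ} {p R : ℝ} {x₀ : V}

theorem lt_of_integral_rpow_sub_le {C : ℝ} (hF : ∀ v, 0 ≤ F v)
    (hadd : ∀ u v, F (u + v) ≤ F u + F v) (hrev : ∀ v, F (-v) ≤ C * F v) (hC : 0 < C)
    (hp : 0 < p) (hsupp : ∀ᵐ z ∂μ, F (z - x₀) < R)
    (hint : ∀ x, Integrable (fun z => F (z - x) ^ p) μ) {x : V}
    (hx : ∫ z, F (z - x) ^ p ∂μ ≤ ∫ z, F (z - x₀) ^ p ∂μ) : F (x - x₀) < (1 + C) * R := by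
  have hR : 0 ≤ R := by
    obtain ⟨z, hz⟩ := hsupp.exists
    exact (hF _).trans hz.le
  have hx₀ : ∫ z, F (z - x₀) ^ p ∂μ < R ^ p := integral_lt_of_ae_lt (hint x₀)
    (hsupp.mono fun z hz => Real.rpow_lt_rpow (hF _) hz hp)
  by_contra! hfar
  -- `F (x - x₀) ≤ F (x - z) + F (z - x₀) < C F (z - x) + R` puts all the mass at distance `≥ R`.
  have hge : ∀ᵐ z ∂μ, R ^ p ≤ F (z - x) ^ p := by
    filter_upwards [hsupp] with z hz
    have htri : F (x - x₀) ≤ C * F (z - x) + F (z - x₀) := by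
      have h := hadd (-(z - x)) (z - x₀)
      rw [show -(z - x) + (z - x₀) = x - x₀ by abel] at h
      linarith [hrev (z - x)]
    have hRz : R ≤ F (z - x) := le_of_mul_le_mul_left (by linarith) hC
    exact Real.rpow_le_rpow hR hRz hp.le
  have := integral_mono_ae (integrable_const _) (hint x) hge
  rw [integral_const, probReal_univ, one_smul] at this
  linarith

end Energy

theorem sub_le_mul_sub_of_hasDerivAt_le {φ φ' : ℝ → ℝ} {c : ℝ}
    (hφ : ∀ a, 0 ≤ a → HasDerivAt φ (φ' a) a) (hφ' : ∀ a, 0 ≤ a → φ' a ≤ c) {a b : ℝ}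
    (ha : 0 ≤ a) (hab : a ≤ b) : φ b - φ a ≤ c * (b - a) := by
  have hint : ∀ t ∈ interior (Ici (0 : ℝ)), 0 ≤ t := fun t ht => interior_subset ht
  exact (convex_Ici 0).image_sub_le_mul_sub_of_deriv_le
    (fun t ht => (hφ t ht).continuousAt.continuousWithinAt)
    (fun t ht => (hφ t (hint t ht)).differentiableAt.differentiableWithinAt)
    (fun t ht => (hφ t (hint t ht)).deriv ▸ hφ' t (hint t ht)) a ha b (ha.trans hab) hab

theorem antitoneOn_Ici_of_hasDerivAt_nonpos {φ φ' : ℝ → ℝ}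
    (hφ : ∀ a, 0 ≤ a → HasDerivAt φ (φ' a) a) (hφ' : ∀ a, 0 ≤ a → φ' a ≤ 0) :
    AntitoneOn φ (Ici 0) := fun a ha b _ hab => by
  linarith [sub_le_mul_sub_of_hasDerivAt_le hφ hφ' ha hab, zero_mul (b - a)]

section Dissipation

variable {X : Type*} [TopologicalSpace X] {S : Set X} {E g : X → ℝ}

theorem IsCompact.tendsto_nhds_of_tendsto_comp {ι : Type*} {l : Filter ι} {u : ι → X} {e : X}
    (hS : IsCompact S) (hE : Continuous E) (huniq : ∀ x ∈ S, E x = E e → x = e)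
    (hu : ∀ᶠ i in l, u i ∈ S) (hEu : Tendsto (E ∘ u) l (𝓝 (E e))) : Tendsto u l (𝓝 e) :=
  hS.tendsto_nhds_of_unique_mapClusterPt hu fun x hx hcl =>
    huniq x hx (eq_of_nhds_neBot (ClusterPt.mono (hcl.continuousAt_comp hE.continuousAt) hEu))

theorem tendsto_comp_atTop_of_dissipation {γ : ℝ → X} {m : ℝ} (hS : IsCompact S)
    (hE : Continuous E) (hg : ContinuousOn g S) (hg0 : ∀ x ∈ S, 0 ≤ g x)
    (hmin : ∀ x ∈ S, m ≤ E x) (hgpos : ∀ x ∈ S, m < E x → 0 < g x)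
    (hγS : ∀ a, 0 ≤ a → γ a ∈ S) (hγ : ∀ a, 0 ≤ a → HasDerivAt (E ∘ γ) (-g (γ a)) a) :
    Tendsto (E ∘ γ) atTop (𝓝 m) := by
  have hanti := antitoneOn_Ici_of_hasDerivAt_nonpos hγ
    fun t ht => neg_nonpos.2 (hg0 _ (hγS t ht))
  suffices hlow : ∀ ε > 0, ∃ a, 0 ≤ a ∧ E (γ a) < m + ε by
    refine tendsto_order.2 ⟨fun b hb => eventually_atTop.2 ⟨0, fun a ha =>
      hb.trans_le (hmin _ (hγS a ha))⟩, fun b hb => ?_⟩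
    obtain ⟨a₀, ha₀, hlt⟩ := hlow (b - m) (sub_pos.2 hb)
    exact eventually_atTop.2 ⟨a₀, fun a ha =>
      (hanti ha₀ (ha₀.trans ha) ha).trans_lt (by simpa using hlt)⟩
  intro ε hε
  by_contra! hhigh
  obtain ⟨xc, ⟨hxcS, hxcE⟩, hxcmin⟩ := (hS.inter_right (isClosed_le continuous_const hE))
    |>.exists_isMinOn ⟨γ 0, hγS 0 le_rfl, hhigh 0 le_rfl⟩ (hg.mono inter_subset_left)
  -- On the compact set where `E ≥ m + ε` the rate `g` is at least `κ > 0`, so `E ∘ γ` would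
  -- eventually fall below `m`.
  set κ := g xc
  have hκ : 0 < κ := hgpos xc hxcS (by linarith [show m + ε ≤ E xc from hxcE])
  obtain ⟨a, ha_def⟩ : ∃ a, κ * a = E (γ 0) - m + κ :=
    ⟨(E (γ 0) - m) / κ + 1, by field_simp⟩
  have ha : 0 ≤ a := by
    have := hmin _ (hγS 0 le_rfl)
    nlinarith
  have hdrop := sub_le_mul_sub_of_hasDerivAt_le hγ
    (fun t ht => neg_le_neg (hxcmin ⟨hγS t ht, hhigh t ht⟩)) le_rfl ha
  simp only [Function.comp_apply, sub_zero, neg_mul] at hdrop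
  linarith [hmin _ (hγS a ha)]

/-- LaSalle's invariance principle for a Lyapunov function `E` with dissipation rate `g`. -/
theorem tendsto_atTop_of_dissipation {γ : ℝ → X} {e : X} (hS : IsCompact S)
    (hE : Continuous E) (hg : ContinuousOn g S) (hg0 : ∀ x ∈ S, 0 ≤ g x)
    (hmin : ∀ x ∈ S, x ≠ e → E e < E x) (hgpos : ∀ x ∈ S, x ≠ e → 0 < g x)
    (hγS : ∀ a, 0 ≤ a → γ a ∈ S) (hγ : ∀ a, 0 ≤ a → HasDerivAt (E ∘ γ) (-g (γ a)) a) :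
    Tendsto γ atTop (𝓝 e) := by
  refine hS.tendsto_nhds_of_tendsto_comp hE
    (fun x hx hEx => by_contra fun hne => (hmin x hx hne).ne' hEx)
    (eventually_atTop.2 ⟨0, hγS⟩) ?_
  refine tendsto_comp_atTop_of_dissipation hS hE hg hg0 (fun x hx => ?_)
    (fun x hx hlt => hgpos x hx (by rintro rfl; exact hlt.false)) hγS hγ
  rcases eq_or_ne x e with rfl | hne
  exacts [le_rfl, (hmin x hx hne).le]

end Dissipation

theorem p_mean_gradient_flow_converges_general
    {n : ℕ} (K : Set (EuclideanSpace ℝ (Fin n)))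
    (hK_cpt : IsCompact K) (hK_conv : Convex ℝ K)
    (hK_int : (0 : EuclideanSpace ℝ (Fin n)) ∈ interior K)
    (F : EuclideanSpace ℝ (Fin n) → ℝ) (hF : F = gauge K)
    (hFsmooth : ContDiffOn ℝ 1 F {(0 : EuclideanSpace ℝ (Fin n))}ᶜ)
    (C : ℝ) (hC : 1 ≤ C) (hrev : ∀ v, F (-v) ≤ C * F v)
    (ℓ : EuclideanSpace ℝ (Fin n) → (EuclideanSpace ℝ (Fin n) →L[ℝ] ℝ))
    (hℓ : ∀ v, v ≠ 0 → ℓ v = (1 / 2 : ℝ) • fderiv ℝ (fun w => F w ^ 2) v)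
    (hℓ0 : ℓ 0 = 0)
    (ℓinv : (EuclideanSpace ℝ (Fin n) →L[ℝ] ℝ) → EuclideanSpace ℝ (Fin n))
    (hright : Function.RightInverse ℓinv ℓ)
    (hℓinvcont : Continuous ℓinv)
    (p : ℝ) (hp : 1 < p)
    (x₀ : EuclideanSpace ℝ (Fin n)) (R : ℝ) (hR : 0 < R)
    (μ : Measure (EuclideanSpace ℝ (Fin n))) [IsProbabilityMeasure μ]
    (hsupp : μ {z | F (z - x₀) < R}ᶜ = 0)
    (E : EuclideanSpace ℝ (Fin n) → ℝ)
    (hE : E = fun x => ∫ z, F (z - x) ^ p ∂μ)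
    (hEconv : StrictConvexOn ℝ {x | F (x - x₀) ≤ C * (1 + C) * R} E)
    (γ : ℝ → EuclideanSpace ℝ (Fin n)) (hγ0 : γ 0 = x₀)
    (hode : ∀ a : ℝ, 0 ≤ a → HasDerivAt γ (ℓinv (-(fderiv ℝ E (γ a)))) a) :
    (∀ a : ℝ, 0 ≤ a → F (γ a - x₀) ≤ C * (1 + C) * R) ∧
    (∃ ep : EuclideanSpace ℝ (Fin n),
      (F (ep - x₀) ≤ C * (1 + C) * R ∧
        ∀ y, F (y - x₀) ≤ C * (1 + C) * R → E ep ≤ E y) ∧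
      (∀ m, (F (m - x₀) ≤ C * (1 + C) * R ∧
        ∀ y, F (y - x₀) ≤ C * (1 + C) * R → E m ≤ E y) → m = ep) ∧
      Filter.Tendsto γ Filter.atTop (nhds ep)) := by
  subst hF hE
  set E := fun x => ∫ z, gauge K (z - x) ^ p ∂μ
  set B := {x | gauge K (x - x₀) ≤ C * (1 + C) * R}
  have hK0 : K ∈ 𝓝 0 := mem_interior_iff_mem_nhds.1 hK_int
  have hcpt := isCompact_setOf_gauge_sub_le hK_cpt.isBounded hK_conv hK0
  have hsupp' : ∀ᵐ z ∂μ, gauge K (z - x₀) < R := hsupp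
  have hsuppS : ∀ᵐ z ∂μ, z ∈ {z | gauge K (z - x₀) ≤ R} := hsupp'.mono fun z hz => hz.le
  obtain ⟨M, hlip⟩ := hK_conv.lipschitz_gauge hK0
  have hFp : ContDiff ℝ 1 fun v => gauge K v ^ p :=
    contDiff_one_rpow_of_lipschitzWith hlip gauge_zero (fun _ => gauge_nonneg _) hFsmooth hp
  have hE : ContDiff ℝ 1 E := contDiff_integral_comp_sub hFp (hcpt x₀ R) hsuppS
  set g := fun x => gauge K (ℓinv (-fderiv ℝ E x)) ^ 2
  have hflow : ∀ a, 0 ≤ a → HasDerivAt (E ∘ γ) (-g (γ a)) a := fun a ha => by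
    have h := ((hE.differentiable one_ne_zero) (γ a)).hasFDerivAt.comp_hasDerivAt a (hode a ha)
    rwa [apply_rightInverse_neg_self hright (legendre_apply_self_eq_gauge_sq hFsmooth hℓ hℓ0)] at h
  have hstay : ∀ a, 0 ≤ a → γ a ∈ B := fun a ha => by
    have hdescent : E (γ a) ≤ E (γ 0) := antitoneOn_Ici_of_hasDerivAt_nonpos hflow
      (fun t _ => neg_nonpos.2 (sq_nonneg _)) self_mem_Ici ha ha
    rw [hγ0] at hdescent
    have hnear := lt_of_integral_rpow_sub_le (F := gauge K) (fun _ => gauge_nonneg _)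
      (gauge_add_le hK_conv (absorbent_nhds_zero hK0)) hrev (one_pos.trans_le hC)
      (one_pos.trans hp) hsupp' (integrable_comp_sub hFp.continuous (hcpt x₀ R) hsuppS)
      hdescent
    refine hnear.le.trans ?_
    rw [mul_assoc]; exact le_mul_of_one_le_left (by positivity) hC
  obtain ⟨ep, hepB, hepmin, hstrict, hcrit⟩ := hEconv.exists_isMinOn_of_isCompact (hcpt x₀ _)
    ⟨x₀, by simp only [B, mem_ofPred_eq, sub_self, gauge_zero]; positivity⟩
    (hE.differentiable one_ne_zero)
  have hgpos : ∀ x ∈ B, x ≠ ep → 0 < g x := fun x hx hne =>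
    (sq_nonneg _).lt_of_ne' fun hg0 => hne <| hcrit x hx <|
      eq_zero_of_gauge_rightInverse_neg_eq_zero (absorbent_nhds_zero hK0) hK_cpt.isBounded
        hright hℓ0 (pow_eq_zero_iff two_ne_zero |>.1 hg0)
  refine ⟨hstay, ep, ⟨hepB, fun y hy => hepmin hy⟩,
    fun m hm => by_contra fun hne => (hstrict m hm.1 hne).not_ge (hm.2 ep hepB), ?_⟩
  exact tendsto_atTop_of_dissipation (hcpt x₀ _) hE.continuous
    (((continuous_gauge hK_conv hK0).comp
      (hℓinvcont.comp (hE.continuous_fderiv one_ne_zero).neg)).pow 2).continuousOn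
    (fun _ _ => sq_nonneg _) hstrict hgpos hstay hflow

/-- Convergence of the continuous-time gradient flow to the `p`-mean in
the flat Minkowski model: for `F` the gauge of a compact convex body (`C¹` away from `0`,
`F(-v) ≤ C F(v)`, Legendre map `ℓ` a homeomorphism with inverse `ℓinv`), `p > 1`, `μ`
supported in `B(x₀,R)` with `E = E_{μ,p}` strictly convex on `B̄(x₀,C(1+C)R)`, every `C¹`
path with `x(0) = x₀` and `x'(a) = ℓ⁻¹(-D E(x(a)))` stays in `B̄(x₀,C(1+C)R)` and
converges to the unique minimizer `e_p` of `E` on that ball. -/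
theorem p_mean_gradient_flow_converges
    {n : ℕ} (K : Set (EuclideanSpace ℝ (Fin n)))
    (hK_cpt : IsCompact K) (hK_conv : Convex ℝ K)
    (hK_int : (0 : EuclideanSpace ℝ (Fin n)) ∈ interior K)
    (F : EuclideanSpace ℝ (Fin n) → ℝ) (hF : F = gauge K)
    (hFsmooth : ContDiffOn ℝ 1 F {(0 : EuclideanSpace ℝ (Fin n))}ᶜ)
    (C : ℝ) (hC : 1 ≤ C) (hrev : ∀ v, F (-v) ≤ C * F v)
    (ℓ : EuclideanSpace ℝ (Fin n) → (EuclideanSpace ℝ (Fin n) →L[ℝ] ℝ))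
    (hℓ : ∀ v, v ≠ 0 → ℓ v = (1 / 2 : ℝ) • fderiv ℝ (fun w => F w ^ 2) v)
    (hℓ0 : ℓ 0 = 0)
    (ℓinv : (EuclideanSpace ℝ (Fin n) →L[ℝ] ℝ) → EuclideanSpace ℝ (Fin n))
    (hleft : Function.LeftInverse ℓinv ℓ) (hright : Function.RightInverse ℓinv ℓ)
    (hℓcont : Continuous ℓ) (hℓinvcont : Continuous ℓinv)
    (p : ℝ) (hp : 1 < p)
    (x₀ : EuclideanSpace ℝ (Fin n)) (R : ℝ) (hR : 0 < R)
    (μ : Measure (EuclideanSpace ℝ (Fin n))) [IsProbabilityMeasure μ]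
    (hsupp : μ {z | F (z - x₀) < R}ᶜ = 0)
    (E : EuclideanSpace ℝ (Fin n) → ℝ)
    (hE : E = fun x => ∫ z, F (z - x) ^ p ∂μ)
    (hEconv : StrictConvexOn ℝ {x | F (x - x₀) ≤ C * (1 + C) * R} E)
    (γ : ℝ → EuclideanSpace ℝ (Fin n)) (hγ0 : γ 0 = x₀)
    (hode : ∀ a : ℝ, 0 ≤ a → HasDerivAt γ (ℓinv (-(fderiv ℝ E (γ a)))) a) :
    (∀ a : ℝ, 0 ≤ a → F (γ a - x₀) ≤ C * (1 + C) * R) ∧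
    (∃ ep : EuclideanSpace ℝ (Fin n),
      (F (ep - x₀) ≤ C * (1 + C) * R ∧
        ∀ y, F (y - x₀) ≤ C * (1 + C) * R → E ep ≤ E y) ∧
      (∀ m, (F (m - x₀) ≤ C * (1 + C) * R ∧
        ∀ y, F (y - x₀) ≤ C * (1 + C) * R → E m ≤ E y) → m = ep) ∧
      Filter.Tendsto γ Filter.atTop (nhds ep)) :=
  p_mean_gradient_flow_converges_general K hK_cpt hK_conv hK_int F hF hFsmooth C hC hrev ℓ hℓ hℓ0
    ℓinv hright hℓinvcont p hp x₀ R hR μ hsupp E hE hEconv γ hγ0 hode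
end

section
/- Let F be the Minkowski gauge of a compact convex body K ⊂ ℝⁿ with 0 in its interior, with F of class C¹ on ℝⁿ∖{0}, and assume the Legendre map ℓ is a homeomorphism of ℝⁿ onto (ℝⁿ)*. Let μ be a compactly supported Borel probability measure, let x ∈ ℝⁿ satisfy μ({x}) < F*(D F_{μ_x}(x)), and let a ↦ x(a) be a path with x(0) = x and right derivative x′₊(0) = −ℓ⁻¹(D F_{μ_x}(x)). Then the right derivative at a = 0 of f(a) = F_μ(x(a)) equals −F*(D F_{μ_x}(x)) · (F*(D F_{μ_x}(x)) − μ({x})), which is strictly negative. -/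
open MeasureTheory Set Filter Asymptotics Topology

/-!
Split `μ = μ_x + μ({x}) δ_x`. The diffuse part `F_{μ_x}` is differentiable at `x` (its derivative
`ξ` is nonzero, as `F*(ξ) > μ({x}) ≥ 0`), so along the path it moves at rate `ξ(-v)`, `v = ℓ⁻¹ ξ`.
The atom contributes `μ({x}) F(x - x(a))`, which has right derivative `μ({x}) F(v)` because `F` is
Lipschitz and positively homogeneous. As `F` is subadditive and positively homogeneous, its
derivative `D` at `v ≠ 0` satisfies `D ≤ F` and `D v = F v` (Euler), so `ξ = ℓ v = F(v) D` has
`F*(ξ) = F(v)` and `ξ(v) = F(v)²`. The two rates add up to `-F(v)² + μ({x}) F(v)`.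
-/

theorem differentiableAt_of_fderiv_ne_zero {𝕜 E F : Type*} [NontriviallyNormedField 𝕜]
    [NormedAddCommGroup E] [NormedSpace 𝕜 E] [NormedAddCommGroup F] [NormedSpace 𝕜 F]
    {f : E → F} {x : E} (h : fderiv 𝕜 f x ≠ 0) : DifferentiableAt 𝕜 f x :=
  not_imp_comm.1 fderiv_zero_of_not_differentiableAt h

section Gauge

variable {E : Type*} [NormedAddCommGroup E] [NormedSpace ℝ E] {s : Set E} {D : E →L[ℝ] ℝ} {v : E}

theorem HasFDerivAt.one_half_smul_fderiv_sq {f : E → ℝ} (hf : HasFDerivAt f D v) :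
    (1 / 2 : ℝ) • fderiv ℝ (fun w => f w ^ 2) v = f v • D := by
  rw [(hf.pow 2).fderiv, smul_smul, nsmul_eq_mul, Nat.cast_ofNat, Nat.add_one_sub_one, pow_one,
    one_div, inv_mul_cancel_left₀ two_ne_zero]

theorem HasFDerivAt.apply_le_gauge (hs : Convex ℝ s) (habs : Absorbent ℝ s)
    (hD : HasFDerivAt (gauge s) D v) (y : E) : D y ≤ gauge s y := by
  set ψ : ℝ → ℝ := fun t => gauge s (v + t • y) - t * gauge s y
  have hψ : HasDerivWithinAt ψ (D y - gauge s y) (Ici 0) 0 := by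
    have hline : HasDerivAt (fun t : ℝ => v + t • y) y 0 :=
      ((hasDerivAt_id 0).smul_const y).const_add v |>.congr_deriv (one_smul ℝ y)
    have := (hD.comp_hasDerivAt_of_eq 0 hline (by simp)).sub
      ((hasDerivAt_id 0).mul_const (gauge s y))
    rw [one_mul] at this
    exact this.hasDerivWithinAt
  have hmax : IsLocalMaxOn ψ (Ici 0) 0 := by
    refine Filter.eventually_of_mem self_mem_nhdsWithin fun t (ht : 0 ≤ t) => ?_
    have := gauge_add_le hs habs v (t • y)
    simp only [ψ, gauge_smul_of_nonneg ht, smul_eq_mul, zero_smul, add_zero, zero_mul,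
      sub_zero] at this ⊢
    linarith
  have h1 : (1 : ℝ) ∈ posTangentConeAt (Ici 0) 0 :=
    mem_posTangentConeAt_of_segment_subset (by simp [segment_eq_Icc, Icc_subset_Ici_self])
  simpa using hmax.hasFDerivWithinAt_nonpos hψ.hasFDerivWithinAt h1

theorem HasFDerivAt.apply_self_eq_gauge (hD : HasFDerivAt (gauge s) D v) : D v = gauge s v := by
  have hray : HasDerivAt (fun t : ℝ => gauge s (t • v)) (D v) 1 :=
    hD.comp_hasDerivAt_of_eq 1 (((hasDerivAt_id 1).smul_const v).congr_deriv (one_smul ℝ v))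
      (one_smul ℝ v).symm
  refine hray.unique (((hasDerivAt_id 1).mul_const (gauge s v)).congr_deriv (one_mul _)
    |>.congr_of_eventuallyEq ?_)
  filter_upwards [eventually_gt_nhds zero_lt_one] with t ht
  simp [gauge_smul_of_nonneg ht.le]

theorem sSup_image_zero_gauge_le_one :
    sSup ((0 : E →L[ℝ] ℝ) '' {y | gauge s y ≤ 1}) = 0 := by
  have hnonempty : {y | gauge s y ≤ 1}.Nonempty := ⟨0, by simp⟩
  simp only [zero_apply, hnonempty.image_const, csSup_singleton]

theorem sSup_image_smul_gauge_le_one_of_hasFDerivAt (hs : Convex ℝ s) (habs : Absorbent ℝ s)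
    (hD : HasFDerivAt (gauge s) D v) (hv : 0 < gauge s v) {c : ℝ} (hc : 0 ≤ c) :
    sSup ((c • D) '' {y | gauge s y ≤ 1}) = c := by
  have hle : ∀ y, gauge s y ≤ 1 → (c • D) y ≤ c := fun y hy =>
    calc (c • D) y = c * D y := rfl
    _ ≤ c * 1 := mul_le_mul_of_nonneg_left ((hD.apply_le_gauge hs habs y).trans hy) hc
    _ = c := mul_one c
  have hunit : gauge s ((gauge s v)⁻¹ • v) ≤ 1 := by
    rw [gauge_smul_of_nonneg (inv_nonneg.mpr hv.le), smul_eq_mul, inv_mul_cancel₀ hv.ne']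
  refine le_antisymm (csSup_le ⟨_, mem_image_of_mem _ hunit⟩ (forall_mem_image.mpr hle))
    (le_csSup ⟨c, forall_mem_image.mpr hle⟩ ⟨_, hunit, ?_⟩)
  rw [smul_apply, map_smul, hD.apply_self_eq_gauge, smul_eq_mul, smul_eq_mul,
    inv_mul_cancel₀ hv.ne', mul_one]

theorem HasDerivWithinAt.gauge_sub (hs : Convex ℝ s) (h0 : s ∈ 𝓝 (0 : E)) {g : ℝ → E} {w : E}
    {t : ℝ} (hg : HasDerivWithinAt g w (Ici t) t) :
    HasDerivWithinAt (fun a => gauge s (g a - g t)) (gauge s w) (Ici t) t := by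
  obtain ⟨L, hL⟩ := hs.lipschitz_gauge h0
  rw [hasDerivWithinAt_iff_isLittleO] at hg ⊢
  refine IsBigO.trans_isLittleO (isBigO_iff.mpr ⟨L, ?_⟩) hg
  filter_upwards [self_mem_nhdsWithin] with a (ha : t ≤ a)
  rw [sub_self, gauge_zero, sub_zero, ← smul_eq_mul, ← gauge_smul_of_nonneg (sub_nonneg.mpr ha),
    ← dist_eq_norm, ← dist_eq_norm]
  exact hL.dist_le_mul _ _

end Gauge

section Atom

variable {α E : Type*} [MeasurableSpace α] [NormedAddCommGroup E]
  {μ : Measure α} {f : α → E}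

theorem Continuous.integrable_of_measure_compl_eq_zero [TopologicalSpace α] [T2Space α]
    [OpensMeasurableSpace α] [IsFiniteMeasureOnCompacts μ] (hf : Continuous f) {s : Set α}
    (hs : IsCompact s) (hμ : μ sᶜ = 0) : Integrable f μ := by
  rw [← Measure.restrict_eq_self_of_ae_mem (measure_eq_zero_iff_ae_notMem.mp hμ |>.mono
    fun _ h => not_not.mp h)]
  exact hf.continuousOn.integrableOn_compact hs

theorem integral_eq_integral_sub_dirac_add [NormedSpace ℝ E] [CompleteSpace E]
    [MeasurableSingletonClass α] [IsFiniteMeasure μ]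
    (hf : Integrable f μ) (x : α) :
    ∫ z, f z ∂μ = ∫ z, f z ∂(μ - μ {x} • Measure.dirac x) + (μ {x}).toReal • f x := by
  rw [← Measure.restrict_singleton]
  conv_lhs => rw [← Measure.sub_add_cancel_of_le (μ.restrict_le_self (s := {x}))]
  rw [integral_add_measure (hf.mono_measure Measure.sub_le) hf.restrict, integral_singleton,
    measureReal_def]

end Atom

theorem median_descent_direction_general
    {n : ℕ} (K : Set (EuclideanSpace ℝ (Fin n)))
    (hK_cpt : IsCompact K) (hK_conv : Convex ℝ K)
    (hK_int : (0 : EuclideanSpace ℝ (Fin n)) ∈ interior K)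
    (F : EuclideanSpace ℝ (Fin n) → ℝ) (hF : F = gauge K)
    (hFsmooth : ContDiffOn ℝ 1 F {(0 : EuclideanSpace ℝ (Fin n))}ᶜ)
    (ℓ : EuclideanSpace ℝ (Fin n) → (EuclideanSpace ℝ (Fin n) →L[ℝ] ℝ))
    (hℓ : ∀ v, v ≠ 0 → ℓ v = (1 / 2 : ℝ) • fderiv ℝ (fun w => F w ^ 2) v)
    (hℓ0 : ℓ 0 = 0)
    (ℓinv : (EuclideanSpace ℝ (Fin n) →L[ℝ] ℝ) → EuclideanSpace ℝ (Fin n))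
    (hright : Function.RightInverse ℓinv ℓ)
    (μ : Measure (EuclideanSpace ℝ (Fin n))) [IsProbabilityMeasure μ]
    (hcpt : ∃ s : Set (EuclideanSpace ℝ (Fin n)), IsCompact s ∧ μ sᶜ = 0)
    -- `Fs` is the dual gauge `F*`
    (Fs : (EuclideanSpace ℝ (Fin n) →L[ℝ] ℝ) → ℝ)
    (hFs : Fs = fun ξ : EuclideanSpace ℝ (Fin n) →L[ℝ] ℝ =>
      sSup (⇑ξ '' {y | F y ≤ 1}))
    (x : EuclideanSpace ℝ (Fin n))
    -- `ξ = D F_{μ_x}(x)` where `μ_x = μ - μ({x})·δ_x`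
    (ξ : EuclideanSpace ℝ (Fin n) →L[ℝ] ℝ)
    (hξ : ξ = fderiv ℝ (fun y => ∫ z, F (z - y) ∂(μ - μ {x} • Measure.dirac x)) x)
    (hx : (μ {x}).toReal < Fs ξ)
    (γ : ℝ → EuclideanSpace ℝ (Fin n)) (hγ0 : γ 0 = x)
    (hγ' : HasDerivWithinAt γ (-(ℓinv ξ)) (Set.Ici 0) 0) :
    HasDerivWithinAt (fun a => ∫ z, F (z - γ a) ∂μ)
        (-(Fs ξ) * (Fs ξ - (μ {x}).toReal)) (Set.Ici 0) 0 ∧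
    -(Fs ξ) * (Fs ξ - (μ {x}).toReal) < 0 := by
  subst hF
  have h0 : K ∈ 𝓝 0 := mem_interior_iff_mem_nhds.mp hK_int
  have habs : Absorbent ℝ K := absorbent_nhds_zero h0
  set v := ℓinv ξ
  have hℓv : ℓ v = ξ := hright ξ
  clear_value v
  have hv : v ≠ 0 := by
    rintro rfl
    simp only [hFs, ← hℓv, hℓ0, sSup_image_zero_gauge_le_one] at hx
    exact hx.not_ge ENNReal.toReal_nonneg
  have hFv : 0 < gauge K v :=
    (gauge_pos habs (NormedSpace.isVonNBounded_of_isBounded ℝ hK_cpt.isBounded)).mpr hv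
  have hD : HasFDerivAt (gauge K) (fderiv ℝ (gauge K) v) v :=
    ((hFsmooth.contDiffAt (isOpen_compl_singleton.mem_nhds hv)).differentiableAt
      one_ne_zero).hasFDerivAt
  have hξD : ξ = gauge K v • fderiv ℝ (gauge K) v := by
    rw [← hℓv, hℓ v hv, hD.one_half_smul_fderiv_sq]
  have hFsξ : Fs ξ = gauge K v :=
    hFs ▸ hξD ▸ sSup_image_smul_gauge_le_one_of_hasFDerivAt hK_conv habs hD hFv hFv.le
  have hξv : ξ v = gauge K v * gauge K v := by
    simp [hξD, hD.apply_self_eq_gauge]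
  have hξne : ξ ≠ 0 := by
    rintro rfl
    exact hFv.ne' (mul_self_eq_zero.mp hξv.symm)
  have hdiffuse : HasFDerivAt
      (fun y => ∫ z, gauge K (z - y) ∂(μ - μ {x} • Measure.dirac x)) ξ x :=
    hξ ▸ (differentiableAt_of_fderiv_ne_zero (hξ ▸ hξne)).hasFDerivAt
  have hatom : HasDerivWithinAt (fun a => gauge K (x - γ a)) (gauge K v) (Ici 0) 0 := by
    simpa [hγ0] using (hγ'.const_sub x).gauge_sub hK_conv h0
  have hsplit : (fun a => ∫ z, gauge K (z - γ a) ∂μ) = fun a =>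
      ∫ z, gauge K (z - γ a) ∂(μ - μ {x} • Measure.dirac x) +
        (μ {x}).toReal * gauge K (x - γ a) := by
    obtain ⟨s, hs, hμs⟩ := hcpt
    funext a
    exact integral_eq_integral_sub_dirac_add ((continuous_gauge hK_conv h0).comp
      (continuous_id.sub continuous_const) |>.integrable_of_measure_compl_eq_zero hs hμs) x
  rw [hFsξ] at hx ⊢
  refine ⟨?_, mul_neg_of_neg_of_pos (neg_neg_of_pos hFv) (sub_pos.mpr hx)⟩
  rw [hsplit]
  refine ((hdiffuse.comp_hasDerivWithinAt_of_eq 0 hγ' hγ0.symm).add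
    (hatom.const_mul (μ {x}).toReal)).congr_deriv ?_
  rw [map_neg, hξv]
  ring

/-- Strict descent of the median functional along the Finsler gradient:
if `μ({x}) < F*(D F_{μ_x}(x))` and `γ` starts at `x` with right derivative
`-ℓ⁻¹(D F_{μ_x}(x))`, then `a ↦ F_μ(γ(a))` has right derivative
`-F*(D F_{μ_x}(x))·(F*(D F_{μ_x}(x)) - μ({x})) < 0` at `a = 0`. -/
theorem median_descent_direction
    {n : ℕ} (K : Set (EuclideanSpace ℝ (Fin n)))
    (hK_cpt : IsCompact K) (hK_conv : Convex ℝ K)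
    (hK_int : (0 : EuclideanSpace ℝ (Fin n)) ∈ interior K)
    (F : EuclideanSpace ℝ (Fin n) → ℝ) (hF : F = gauge K)
    (hFsmooth : ContDiffOn ℝ 1 F {(0 : EuclideanSpace ℝ (Fin n))}ᶜ)
    (ℓ : EuclideanSpace ℝ (Fin n) → (EuclideanSpace ℝ (Fin n) →L[ℝ] ℝ))
    (hℓ : ∀ v, v ≠ 0 → ℓ v = (1 / 2 : ℝ) • fderiv ℝ (fun w => F w ^ 2) v)
    (hℓ0 : ℓ 0 = 0)
    (ℓinv : (EuclideanSpace ℝ (Fin n) →L[ℝ] ℝ) → EuclideanSpace ℝ (Fin n))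
    (hleft : Function.LeftInverse ℓinv ℓ) (hright : Function.RightInverse ℓinv ℓ)
    (hℓcont : Continuous ℓ) (hℓinvcont : Continuous ℓinv)
    (μ : Measure (EuclideanSpace ℝ (Fin n))) [IsProbabilityMeasure μ]
    (hcpt : ∃ s : Set (EuclideanSpace ℝ (Fin n)), IsCompact s ∧ μ sᶜ = 0)
    -- `Fs` is the dual gauge `F*`
    (Fs : (EuclideanSpace ℝ (Fin n) →L[ℝ] ℝ) → ℝ)
    (hFs : Fs = fun ξ : EuclideanSpace ℝ (Fin n) →L[ℝ] ℝ =>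
      sSup (⇑ξ '' {y | F y ≤ 1}))
    (x : EuclideanSpace ℝ (Fin n))
    -- `ξ = D F_{μ_x}(x)` where `μ_x = μ - μ({x})·δ_x`
    (ξ : EuclideanSpace ℝ (Fin n) →L[ℝ] ℝ)
    (hξ : ξ = fderiv ℝ (fun y => ∫ z, F (z - y) ∂(μ - μ {x} • Measure.dirac x)) x)
    (hx : (μ {x}).toReal < Fs ξ)
    (γ : ℝ → EuclideanSpace ℝ (Fin n)) (hγ0 : γ 0 = x)
    (hγ' : HasDerivWithinAt γ (-(ℓinv ξ)) (Set.Ici 0) 0) :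
    HasDerivWithinAt (fun a => ∫ z, F (z - γ a) ∂μ)
        (-(Fs ξ) * (Fs ξ - (μ {x}).toReal)) (Set.Ici 0) 0 ∧
    -(Fs ξ) * (Fs ξ - (μ {x}).toReal) < 0 :=
  median_descent_direction_general K hK_cpt hK_conv hK_int F hF hFsmooth ℓ hℓ hℓ0 ℓinv hright μ hcpt
    Fs hFs x ξ hξ hx γ hγ0 hγ'
end
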